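/- arXiv:2307.10742 — 3 statements merged into one kernel-verified Lean document; each statement's English description precedes it below -/
import Mathlib

section
/- Let B = {X_1,…,X_n} be a finite set of indices, Φ(X) bounded operators, s ∈ [0,1]^B, H(s) = Σ_{X∈B} s_X Φ(X), and β ≥ 0. Then ‖ Π_{X∈B} (∂/∂s_X) e^{-β H(s)} ‖ ≤ (Π_{X∈B} β‖Φ(X)‖) · e^{β‖H(s)‖}. -/
/-!
With `M u = -β • Σ_X u_X • Φ X`, a continuous `ℝ`-linear map into the operator algebra, the
function is `exp ∘ M`, and `∂/∂s_X` of `g ∘ M` is `(D_v g) ∘ M` with `D_v` the directional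
derivative along `v = M (e_X) = -β • Φ X`. Call `g` `K`-exp-dominated if it is entire with
`m`-th Taylor coefficient at `0` of norm at most `K / m!`; `exp` is `1`-exp-dominated when
`‖1‖ ≤ 1`. Since the `m`-th coefficient of the derivative comes from `m + 1` terms of the
`(m+1)`-st one, `D_v` maps `K`-dominated functions to `‖v‖ K`-dominated ones, and a
`K`-dominated function is bounded by `K e^{‖a‖}`.
-/

open NormedSpace

/-- The iterated mixed partial derivative of a function of finitely many real
parameters, one derivative along each coordinate direction listed in `l`. -/
noncomputable def mixedPartial {ι : Type*} [Fintype ι] [DecidableEq ι]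
    {A : Type*} [NormedAddCommGroup A] [NormedSpace ℝ A] :
    List ι → ((ι → ℝ) → A) → ((ι → ℝ) → A)
  | [], f => f
  | x :: xs, f => fun s => fderiv ℝ (mixedPartial xs f) s (Pi.single x 1)

open scoped Nat

namespace FormalMultilinearSeries

variable {𝕜 E F : Type*} [NontriviallyNormedField 𝕜] [NormedAddCommGroup E] [NormedSpace 𝕜 E]
  [NormedAddCommGroup F] [NormedSpace 𝕜 F]

theorem norm_derivSeries_le (p : FormalMultilinearSeries 𝕜 E F) (n : ℕ) :
    ‖p.derivSeries n‖ ≤ (n + 1) * ‖p (n + 1)‖ := by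
  have h_curry : ‖p.derivSeries n‖ ≤ ‖p.changeOriginSeries 1 n‖ := by
    refine (ContinuousLinearMap.norm_compContinuousMultilinearMap_le _ _).trans ?_
    refine mul_le_of_le_one_left (norm_nonneg _) ?_
    exact ContinuousLinearMap.opNorm_le_bound _ zero_le_one (by simp)
  have h_card : Fintype.card {s : Finset (Fin (1 + n)) // s.card = n} = n + 1 := by
    rw [Fintype.card_subtype, ← Finset.powerset_univ, ← Finset.powersetCard_eq_filter,
      Finset.card_powersetCard, Finset.card_univ, Fintype.card_fin, add_comm,
      Nat.choose_succ_self_right]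
  have h_change := NNReal.coe_le_coe.mpr (p.nnnorm_changeOriginSeries_le_tsum 1 n)
  rw [tsum_fintype, Finset.sum_const, Finset.card_univ, h_card, nsmul_eq_mul, add_comm 1 n]
    at h_change
  push_cast at h_change
  exact h_curry.trans h_change

end FormalMultilinearSeries

section ExpDominatedFunctions

variable {𝕜 E F : Type*} [NontriviallyNormedField 𝕜] [NormedAddCommGroup E] [NormedSpace 𝕜 E]
  [NormedAddCommGroup F] [NormedSpace 𝕜 F]

variable (𝕜) in
def ExpDominated (K : ℝ) (h : E → F) : Prop :=
  ∃ q : FormalMultilinearSeries 𝕜 E F, HasFPowerSeriesOnBall h q 0 ⊤ ∧ ∀ m, ‖q m‖ ≤ K / m !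

theorem expDominated_exp {𝕂 A : Type*} [RCLike 𝕂] [NormedRing A] [NormedAlgebra 𝕂 A]
    [CompleteSpace A] (h_one : ‖(1 : A)‖ ≤ 1) : ExpDominated 𝕂 1 (exp : A → A) := by
  refine ⟨expSeries 𝕂 A, exp_hasFPowerSeriesOnBall, fun m => ?_⟩
  calc ‖expSeries 𝕂 A m‖
      = ‖((m ! : 𝕂)⁻¹ • ContinuousMultilinearMap.mkPiAlgebraFin 𝕂 m A)‖ := rfl
    _ ≤ (m ! : ℝ)⁻¹ * max 1 ‖(1 : A)‖ := by
        refine (ContinuousMultilinearMap.opNorm_smul_le _ _).trans ?_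
        rw [norm_inv, RCLike.norm_natCast]
        gcongr
        exact ContinuousMultilinearMap.norm_mkPiAlgebraFin_le
    _ = 1 / m ! := by rw [max_eq_left h_one, one_div, mul_one]

namespace ExpDominated

variable {K : ℝ} {h : E → F}

theorem norm_le (hh : ExpDominated 𝕜 K h) (a : E) : ‖h a‖ ≤ K * Real.exp ‖a‖ := by
  obtain ⟨q, hq, hq_le⟩ := hh
  have h_sum := hq.hasSum (Metric.mem_eball.mpr (edist_lt_top a 0))
  rw [zero_add] at h_sum
  have h_exp : HasSum (fun n => K * (‖a‖ ^ n / n !)) (K * Real.exp ‖a‖) := by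
    rw [Real.exp_eq_exp_ℝ]
    exact (NormedSpace.expSeries_div_hasSum_exp ‖a‖).mul_left K
  rw [← h_sum.tsum_eq]
  refine tsum_of_norm_bounded h_exp fun n => ((q n).le_opNorm _).trans ?_
  rw [Fin.prod_const, ← mul_div_assoc, mul_div_right_comm]
  gcongr
  exact hq_le n

variable [CompleteSpace F]

theorem differentiable (hh : ExpDominated 𝕜 K h) : Differentiable 𝕜 h := by
  obtain ⟨q, hq, -⟩ := hh
  exact fun a => (hq.analyticAt_of_mem (Metric.mem_eball.mpr (edist_lt_top _ _))).differentiableAt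

theorem fderiv_apply (hh : ExpDominated 𝕜 K h) (v : E) :
    ExpDominated 𝕜 (‖v‖ * K) (fun a => fderiv 𝕜 h a v) := by
  obtain ⟨q, hq, hq_le⟩ := hh
  refine ⟨(ContinuousLinearMap.apply 𝕜 F v).compFormalMultilinearSeries q.derivSeries,
    (ContinuousLinearMap.apply 𝕜 F v).comp_hasFPowerSeriesOnBall hq.fderiv, fun m => ?_⟩
  have h_apply : ‖ContinuousLinearMap.apply 𝕜 F v‖ ≤ ‖v‖ :=
    ContinuousLinearMap.opNorm_le_bound _ (norm_nonneg v)
      (fun f => (f.le_opNorm v).trans_eq (mul_comm _ _))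
  calc ‖(ContinuousLinearMap.apply 𝕜 F v).compFormalMultilinearSeries q.derivSeries m‖
      ≤ ‖v‖ * ((m + 1) * (K / (m + 1)!)) := by
        refine (ContinuousLinearMap.norm_compContinuousMultilinearMap_le _ _).trans ?_
        gcongr
        exact (q.norm_derivSeries_le m).trans (by gcongr; exact hq_le _)
    _ = ‖v‖ * K / m ! := by
        rw [Nat.factorial_succ]
        push_cast
        field_simp

end ExpDominated

end ExpDominatedFunctions

section MixedPartial

variable {𝕂 V E F : Type*} [RCLike 𝕂] [NormedAddCommGroup V] [NormedSpace ℝ V]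
  [NormedAddCommGroup E] [NormedSpace 𝕂 E] [NormedSpace ℝ E] [IsScalarTower ℝ 𝕂 E]
  [NormedAddCommGroup F] [NormedSpace 𝕂 F] [NormedSpace ℝ F] [IsScalarTower ℝ 𝕂 F]

theorem fderiv_comp_continuousLinearMap_apply {g : E → F} (M : V →L[ℝ] E) {u : V}
    (hg : DifferentiableAt 𝕂 g (M u)) (v : V) :
    fderiv ℝ (fun w => g (M w)) u v = fderiv 𝕂 g (M u) (M v) := by
  have h_comp : HasFDerivAt (fun w => g (M w)) _ u :=
    (hg.restrictScalars ℝ).hasFDerivAt.comp u M.hasFDerivAt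
  rw [h_comp.fderiv, ContinuousLinearMap.comp_apply, hg.fderiv_restrictScalars ℝ]
  rfl

variable [CompleteSpace F] {ι : Type*} [Fintype ι] [DecidableEq ι] {K : ℝ} {h : E → F}

theorem ExpDominated.exists_mixedPartial_comp (hh : ExpDominated 𝕂 K h)
    (M : (ι → ℝ) →L[ℝ] E) (l : List ι) :
    ∃ g : E → F, ExpDominated 𝕂 ((l.map fun x => ‖M (Pi.single x 1)‖).prod * K) g ∧
      mixedPartial l (fun u => h (M u)) = fun u => g (M u) := by
  induction l with
  | nil => exact ⟨h, by simpa using hh, rfl⟩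
  | cons x xs ih =>
    obtain ⟨g, hg, hg_eq⟩ := ih
    refine ⟨fun a => fderiv 𝕂 g a (M (Pi.single x 1)), ?_, funext fun u => ?_⟩
    · simpa only [List.map_cons, List.prod_cons, mul_assoc] using hg.fderiv_apply _
    · change fderiv ℝ (mixedPartial xs fun u => h (M u)) u (Pi.single x 1) = _
      rw [hg_eq, fderiv_comp_continuousLinearMap_apply M (hg.differentiable _)]

theorem ExpDominated.norm_mixedPartial_comp_le (hh : ExpDominated 𝕂 K h)
    (M : (ι → ℝ) →L[ℝ] E) (l : List ι) (s : ι → ℝ) :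
    ‖mixedPartial l (fun u => h (M u)) s‖ ≤
      (l.map fun x => ‖M (Pi.single x 1)‖).prod * K * Real.exp ‖M s‖ := by
  obtain ⟨g, hg, hg_eq⟩ := hh.exists_mixedPartial_comp M l
  rw [hg_eq]
  exact hg.norm_le (M s)

end MixedPartial

theorem stmt_9_general {ι E : Type*} [Fintype ι] [DecidableEq ι] [LinearOrder ι]
    [NormedAddCommGroup E] [InnerProductSpace ℂ E] [FiniteDimensional ℂ E]
    (Φ : ι → E →L[ℂ] E) (β : ℝ) (hβ : 0 ≤ β) (B : Finset ι)
    (s : ι → ℝ) :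
    ‖mixedPartial (B.sort (· ≤ ·))
        (fun u => exp (-(β • ∑ X ∈ B, u X • Φ X))) s‖ ≤
      (∏ X ∈ B, β * ‖Φ X‖) * Real.exp (β * ‖∑ X ∈ B, s X • Φ X‖) := by
  set M : (ι → ℝ) →L[ℝ] (E →L[ℂ] E) :=
    -(β • ∑ X ∈ B, (ContinuousLinearMap.proj X).smulRight (Φ X))
  have hM (u : ι → ℝ) : M u = -(β • ∑ X ∈ B, u X • Φ X) := by simp [M]
  have h_prod : ((B.sort (· ≤ ·)).map fun x => ‖M (Pi.single x 1)‖).prod =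
      ∏ X ∈ B, β * ‖Φ X‖ := by
    rw [← List.prod_toFinset _ (B.sort_nodup _), Finset.sort_toFinset]
    refine Finset.prod_congr rfl fun x hx => ?_
    rw [hM, Finset.sum_eq_single_of_mem x hx fun y _ hyx => by simp [hyx], norm_neg, norm_smul,
      Real.norm_of_nonneg hβ, Pi.single_eq_same, one_smul]
  have h_exp := expDominated_exp (𝕂 := ℂ) (A := E →L[ℂ] E) ContinuousLinearMap.norm_id_le
  calc _ = ‖mixedPartial (B.sort (· ≤ ·)) (fun u => exp (M u)) s‖ := by simp only [hM]
    _ ≤ _ := h_exp.norm_mixedPartial_comp_le M _ s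
    _ = _ := by rw [h_prod, mul_one, hM, norm_neg, norm_smul, Real.norm_of_nonneg hβ]

/-- Bound on the mixed partial derivatives (one in each decoupling parameter `s_X`,
`X ∈ B`, each appearing linearly in `H(s) = Σ_X s_X Φ(X)`) of `e^{-β H(s)}`:
`‖Π_{X∈B} ∂/∂s_X e^{-β H(s)}‖ ≤ (Π_{X∈B} β ‖Φ(X)‖) e^{β ‖H(s)‖}`. -/
theorem stmt_9 {ι E : Type*} [Fintype ι] [DecidableEq ι] [LinearOrder ι]
    [NormedAddCommGroup E] [InnerProductSpace ℂ E] [FiniteDimensional ℂ E]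
    (Φ : ι → E →L[ℂ] E) (β : ℝ) (hβ : 0 ≤ β) (B : Finset ι)
    (s : ι → ℝ) (hs : ∀ X ∈ B, s X ∈ Set.Icc (0:ℝ) 1) :
    ‖mixedPartial (B.sort (· ≤ ·))
        (fun u => exp (-(β • ∑ X ∈ B, u X • Φ X))) s‖ ≤
      (∏ X ∈ B, β * ‖Φ X‖) * Real.exp (β * ‖∑ X ∈ B, s X • Φ X‖) :=
  stmt_9_general Φ β hβ B s
end

section
/- Let B be a countable set of bonds and ζ: B → (0,∞) weights. Suppose nonnegative weights W: B → [0,∞) satisfy W(X) ≤ ζ(X) / Π_{Y∈B, Y≠X, Y∩X≠∅} (1+ζ(Y)) for every X ∈ B (products assumed finite). Define T(X_0) = 1 + Σ_{n≥1} Σ over finite families {X_1,…,X_n} ⊆ B\{X_0} whose intersection graph together with X_0 is connected, of Π_i W(X_i). Then W(X)·T(X) ≤ ζ(X) for every X ∈ B; in particular T(X) is finite. -/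
/-! Let `T_n(X)` be the sum over the attached families of at most `n` bonds, the empty family
(weight `1`) included. A family attached to `X` whose bonds meeting `X` all lie in `insert Y u`
splits injectively into the component of `Y` in it and the rest. The component is empty or a
connected family of at most `n` bonds containing `Y`; removing `Y` from it leaves a family
attached to `Y`, so these components weigh at most `W(Y) T_{n-1}(Y) ≤ ζ(Y)` in total. The rest
is attached to `X` through `u`. Induction on `u` gives `T_n(X) ≤ ∏_{Y ∈ nb X} (1 + ζ(Y))`, hence
`W(X) T_n(X) ≤ ζ(X)` by the hypothesis on `W`, and `T(X) = sup_n T_n(X)`. -/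

open scoped ENNReal

/-- The intersection graph of a finite family of bonds: two distinct bonds are adjacent
iff they intersect. -/
def bondGraph {L : Type*} [DecidableEq L] (𝒮 : Finset (Finset L)) :
    SimpleGraph {X // X ∈ 𝒮} :=
  SimpleGraph.fromRel (fun A B => ¬ Disjoint A.1 B.1)

namespace ENNReal

variable {α β γ : Type*}

theorem tsum_le_tsum_mul_tsum_of_injective {f : α → ℝ≥0∞} {g : β → ℝ≥0∞} {h : γ → ℝ≥0∞}
    (Φ : α → β × γ) (hΦ : Function.Injective Φ) (hf : ∀ a, f a ≤ g (Φ a).1 * h (Φ a).2) :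
    ∑' a, f a ≤ (∑' b, g b) * ∑' c, h c :=
  calc ∑' a, f a ≤ ∑' a, g (Φ a).1 * h (Φ a).2 := ENNReal.tsum_le_tsum hf
    _ ≤ ∑' p : β × γ, g p.1 * h p.2 :=
      ENNReal.tsum_comp_le_tsum_of_injective hΦ fun p => g p.1 * h p.2
    _ = ∑' b, ∑' c, g b * h c := ENNReal.tsum_prod (f := fun b c => g b * h c)
    _ = (∑' b, g b) * ∑' c, h c := by simp only [ENNReal.tsum_mul_left, ENNReal.tsum_mul_right]

theorem tsum_eq_iSup_tsum_inter_sublevel (s : Set α) (κ : α → ℕ) (f : α → ℝ≥0∞) :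
    ∑' a : s, f a = ⨆ n, ∑' a : ↥(s ∩ {a | κ a ≤ n}), f a := by
  refine le_antisymm ?_ (iSup_le fun n => ENNReal.tsum_mono_subtype f Set.inter_subset_left)
  rw [ENNReal.tsum_eq_iSup_sum]
  refine iSup_le fun t => le_iSup_of_le (t.sup fun a => κ a) ?_
  rw [← Finset.tsum_subtype t fun a : s => f a]
  exact ENNReal.tsum_comp_le_tsum_of_injective
    (f := fun a : t => (⟨a.1.1, a.1.2, Finset.le_sup (f := fun a : s => κ a) a.2⟩ :
      ↥(s ∩ {a | κ a ≤ t.sup fun a => κ a})))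
    (fun a b hab => Subtype.ext (Subtype.ext (by simpa using congrArg Subtype.val hab))) _

end ENNReal

namespace Bonds

variable {L : Type*}

def Linked (𝒮 : Finset (Finset L)) : Finset L → Finset L → Prop :=
  Relation.ReflTransGen fun A B => A ∈ 𝒮 ∧ B ∈ 𝒮 ∧ ¬Disjoint A B

variable {𝒮 𝒯 : Finset (Finset L)} {A B X Y : Finset L}

theorem Linked.symm (h : Linked 𝒮 A B) : Linked 𝒮 B A := by
  induction h with
  | refl => exact .refl
  | tail _ hstep ih => exact .head ⟨hstep.2.1, hstep.1, fun hd => hstep.2.2 hd.symm⟩ ih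

theorem Linked.mono (h𝒮𝒯 : 𝒮 ⊆ 𝒯) (h : Linked 𝒮 A B) : Linked 𝒯 A B :=
  Relation.ReflTransGen.mono (fun _ _ hstep => ⟨h𝒮𝒯 hstep.1, h𝒮𝒯 hstep.2.1, hstep.2.2⟩) _ _ h

open Classical in
noncomputable def component (𝒮 : Finset (Finset L)) (Y : Finset L) : Finset (Finset L) :=
  𝒮.filter (Linked 𝒮 Y)

theorem mem_component : B ∈ component 𝒮 Y ↔ B ∈ 𝒮 ∧ Linked 𝒮 Y B := by
  classical
  unfold component
  exact Finset.mem_filter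

theorem component_subset : component 𝒮 Y ⊆ 𝒮 := fun _ hB => (mem_component.1 hB).1

theorem component_eq_empty (hY : Y ∉ 𝒮) : component 𝒮 Y = ∅ := by
  refine Finset.eq_empty_of_forall_notMem fun B hB => ?_
  obtain ⟨hB𝒮, hYB⟩ := mem_component.1 hB
  rcases hYB.cases_head with rfl | ⟨_, hstep, _⟩
  exacts [hY hB𝒮, hY hstep.1]

theorem Linked.component (h : Linked 𝒮 Y B) : Linked (component 𝒮 Y) Y B := by
  induction h with
  | refl => exact .refl
  | @tail P Q hYP hPQ ih =>
    exact ih.tail ⟨mem_component.2 ⟨hPQ.1, hYP⟩, mem_component.2 ⟨hPQ.2.1, hYP.tail hPQ⟩, hPQ.2.2⟩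

variable [DecidableEq L]

theorem Linked.exists_mem_not_disjoint (hX : X ∉ 𝒮)
    (h : Linked (insert X 𝒮) A X) (hA : A ∈ 𝒮) : ∃ B ∈ 𝒮, Linked 𝒮 A B ∧ ¬Disjoint B X := by
  induction h using Relation.ReflTransGen.head_induction_on with
  | refl => exact absurd hA hX
  | @head A C hAC _ ih =>
    by_cases hCX : C = X
    · exact ⟨A, hA, .refl, hCX ▸ hAC.2.2⟩
    · have hC : C ∈ 𝒮 := (Finset.mem_insert.1 hAC.2.1).resolve_left hCX
      obtain ⟨B, hB, hCB, hBX⟩ := ih hC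
      exact ⟨B, hB, .head ⟨hA, hC, hAC.2.2⟩ hCB, hBX⟩

theorem Linked.reachable (hA : A ∈ 𝒮) (h : Linked 𝒮 A B) (hB : B ∈ 𝒮) :
    (bondGraph 𝒮).Reachable ⟨A, hA⟩ ⟨B, hB⟩ := by
  induction h with
  | refl => rfl
  | @tail P Q _ hPQ ih =>
    refine (ih hPQ.1).trans ?_
    by_cases hPQeq : P = Q
    · subst hPQeq; rfl
    · exact SimpleGraph.Adj.reachable
        ⟨fun he => hPQeq (congrArg Subtype.val he), Or.inl hPQ.2.2⟩

theorem bondGraph_connected_iff (hX : X ∈ 𝒮) :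
    (bondGraph 𝒮).Connected ↔ ∀ A ∈ 𝒮, Linked 𝒮 A X := by
  refine ⟨fun h A hA => ?_, fun h => ?_⟩
  · have hreach := (SimpleGraph.reachable_iff_reflTransGen _ _).1 (h.preconnected ⟨A, hA⟩ ⟨X, hX⟩)
    refine Relation.ReflTransGen.lift Subtype.val (fun P Q hPQ => ⟨P.2, Q.2, ?_⟩) _ _ hreach
    rcases hPQ.2 with hd | hd
    exacts [hd, fun hd' => hd hd'.symm]
  · refine SimpleGraph.connected_iff_exists_forall_reachable _ |>.2 ⟨⟨X, hX⟩, fun A => ?_⟩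
    exact ((h A.1 A.2).reachable A.2 hX).symm

theorem component_connected (hY : Y ∈ 𝒮) : (bondGraph (component 𝒮 Y)).Connected :=
  (bondGraph_connected_iff (mem_component.2 ⟨hY, .refl⟩)).2 fun _ hA =>
    (mem_component.1 hA).2.component.symm

theorem exists_mem_not_disjoint_of_connected_insert (hX : X ∉ 𝒮)
    (h : (bondGraph (insert X 𝒮)).Connected) (hne : 𝒮.Nonempty) : ∃ B ∈ 𝒮, ¬Disjoint B X := by
  obtain ⟨A, hA⟩ := hne
  have hAX := (bondGraph_connected_iff (Finset.mem_insert_self X 𝒮)).1 h A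
    (Finset.mem_insert_of_mem hA)
  obtain ⟨B, hB, -, hBX⟩ := hAX.exists_mem_not_disjoint hX hA
  exact ⟨B, hB, hBX⟩

theorem component_subset_sdiff_component (hA : A ∈ 𝒮) (hAY : A ∉ component 𝒮 Y) :
    component 𝒮 A ⊆ 𝒮 \ component 𝒮 Y := fun D hD => by
  obtain ⟨hD𝒮, hAD⟩ := mem_component.1 hD
  exact Finset.mem_sdiff.2 ⟨hD𝒮, fun hDY =>
    hAY (mem_component.2 ⟨hA, (mem_component.1 hDY).2.trans hAD.symm⟩)⟩

/-- Every remaining bond reaches a bond meeting `X` inside its own component, which is disjoint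
from the removed one. -/
theorem connected_insert_sdiff_component (hX : X ∉ 𝒮) (h : (bondGraph (insert X 𝒮)).Connected) :
    (bondGraph (insert X (𝒮 \ component 𝒮 Y))).Connected := by
  rw [bondGraph_connected_iff (Finset.mem_insert_self _ _)] at h ⊢
  intro A hA
  rcases Finset.mem_insert.1 hA with rfl | hA
  · exact .refl
  obtain ⟨hA𝒮, hAY⟩ := Finset.mem_sdiff.1 hA
  obtain ⟨B, hB, hAB, hBX⟩ :=
    (h A (Finset.mem_insert_of_mem hA𝒮)).exists_mem_not_disjoint hX hA𝒮
  have hsub := component_subset_sdiff_component hA𝒮 hAY (Y := Y)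
  refine (hAB.component.mono (hsub.trans (Finset.subset_insert X _))).tail
    ⟨Finset.mem_insert_of_mem (hsub (mem_component.2 ⟨hB, hAB⟩)), Finset.mem_insert_self _ _, hBX⟩

variable (𝔅 : Set (Finset L)) (W : Finset L → ℝ≥0∞)

/-- The families summed in `T(X)`, plus the empty family, which accounts for the term `1`. -/
def attached (X : Finset L) : Set (Finset (Finset L)) :=
  {𝒮 | ↑𝒮 ⊆ 𝔅 ∧ X ∉ 𝒮 ∧ (bondGraph (insert X 𝒮)).Connected}

def rooted (Y : Finset L) : Set (Finset (Finset L)) :=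
  {𝒯 | ↑𝒯 ⊆ 𝔅 ∧ Y ∈ 𝒯 ∧ (bondGraph 𝒯).Connected}

theorem one_add_tsum_eq_tsum_attached (X : Finset L) :
    1 + ∑' 𝒮 : {𝒮 : Finset (Finset L) //
          ↑𝒮 ⊆ 𝔅 ∧ X ∉ 𝒮 ∧ 𝒮.Nonempty ∧ (bondGraph (insert X 𝒮)).Connected},
        ∏ Z ∈ (𝒮 : Finset (Finset L)), W Z =
      ∑' 𝒮 : attached 𝔅 X, ∏ Z ∈ (𝒮 : Finset (Finset L)), W Z := by
  have hsplit : attached 𝔅 X = {∅} ∪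
      {𝒮 | ↑𝒮 ⊆ 𝔅 ∧ X ∉ 𝒮 ∧ 𝒮.Nonempty ∧ (bondGraph (insert X 𝒮)).Connected} := by
    ext 𝒮
    rcases 𝒮.eq_empty_or_nonempty with rfl | hne
    · simp only [Set.mem_union, Set.mem_singleton_iff, true_or, iff_true]
      refine ⟨by simp, Finset.notMem_empty X,
        (bondGraph_connected_iff (Finset.mem_insert_self X ∅)).2 fun A hA => ?_⟩
      obtain rfl := Finset.mem_singleton.1 hA
      exact .refl
    · simp [attached, hne, hne.ne_empty]
  rw [hsplit, Summable.tsum_union_disjoint (f := fun 𝒮 => ∏ Z ∈ 𝒮, W Z) (by simp)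
    ENNReal.summable ENNReal.summable, tsum_singleton (∅ : Finset (Finset L)) fun 𝒮 => ∏ Z ∈ 𝒮, W Z,
    Finset.prod_empty]
  rfl

theorem tsum_rooted_succ_le_mul (Y : Finset L) (n : ℕ) :
    ∑' 𝒯 : ↥(rooted 𝔅 Y ∩ {𝒯 | 𝒯.card ≤ n + 1}), ∏ Z ∈ (𝒯 : Finset (Finset L)), W Z ≤
      W Y * ∑' 𝒮 : ↥(attached 𝔅 Y ∩ {𝒮 | 𝒮.card ≤ n}), ∏ Z ∈ (𝒮 : Finset (Finset L)), W Z := by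
  have herase : ∀ 𝒯 ∈ rooted 𝔅 Y ∩ {𝒯 | 𝒯.card ≤ n + 1},
      𝒯.erase Y ∈ attached 𝔅 Y ∩ {𝒮 | 𝒮.card ≤ n} := by
    rintro 𝒯 ⟨⟨h𝔅, hY, hconn⟩, hcard⟩
    refine ⟨⟨fun Z hZ => h𝔅 (Finset.mem_of_mem_erase hZ), Finset.notMem_erase Y 𝒯, ?_⟩, ?_⟩
    · rwa [Finset.insert_erase hY]
    · exact (Finset.card_erase_of_mem hY).trans_le (Nat.sub_le_of_le_add hcard)
  calc ∑' 𝒯 : ↥(rooted 𝔅 Y ∩ {𝒯 | 𝒯.card ≤ n + 1}), ∏ Z ∈ (𝒯 : Finset (Finset L)), W Z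
      = ∑' 𝒯 : ↥(rooted 𝔅 Y ∩ {𝒯 | 𝒯.card ≤ n + 1}), W Y * ∏ Z ∈ 𝒯.1.erase Y, W Z :=
        tsum_congr fun 𝒯 => (Finset.mul_prod_erase _ _ 𝒯.2.1.2.1).symm
    _ ≤ ∑' 𝒮 : ↥(attached 𝔅 Y ∩ {𝒮 | 𝒮.card ≤ n}), W Y * ∏ Z ∈ 𝒮.1, W Z :=
        ENNReal.tsum_comp_le_tsum_of_injective (f := fun 𝒯 => ⟨𝒯.1.erase Y, herase 𝒯.1 𝒯.2⟩)
          (fun 𝒯₁ 𝒯₂ h => Subtype.ext <|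
            Finset.erase_injOn' Y 𝒯₁.2.1.2.1 𝒯₂.2.1.2.1 (congrArg Subtype.val h))
          fun 𝒮 => W Y * ∏ Z ∈ 𝒮.1, W Z
    _ = _ := ENNReal.tsum_mul_left

def attachedVia (X : Finset L) (n : ℕ) (u : Finset (Finset L)) : Set (Finset (Finset L)) :=
  {𝒮 ∈ attached 𝔅 X | 𝒮.card ≤ n ∧ ∀ Z ∈ 𝒮, ¬Disjoint Z X → Z ∈ u}

variable {𝔅}

theorem component_mem_insert_empty_rooted {n : ℕ} (h𝔅 : ↑𝒮 ⊆ 𝔅) (hn : 𝒮.card ≤ n)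
    (Y : Finset L) : component 𝒮 Y ∈ insert ∅ (rooted 𝔅 Y ∩ {𝒯 | 𝒯.card ≤ n}) := by
  by_cases hY : Y ∈ 𝒮
  · exact Or.inr ⟨⟨fun Z hZ => h𝔅 (component_subset hZ), mem_component.2 ⟨hY, .refl⟩,
      component_connected hY⟩, (Finset.card_le_card component_subset).trans hn⟩
  · exact Or.inl (component_eq_empty hY)

theorem sdiff_component_mem_attachedVia {n : ℕ} {u : Finset (Finset L)}
    (h : 𝒮 ∈ attachedVia 𝔅 X n (insert Y u)) : 𝒮 \ component 𝒮 Y ∈ attachedVia 𝔅 X n u := by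
  obtain ⟨⟨h𝔅, hX, hconn⟩, hn, hgen⟩ := h
  refine ⟨⟨fun Z hZ => h𝔅 (Finset.sdiff_subset hZ), fun hX' => hX (Finset.sdiff_subset hX'),
    connected_insert_sdiff_component hX hconn⟩,
    (Finset.card_le_card Finset.sdiff_subset).trans hn, fun Z hZ hZX => ?_⟩
  obtain ⟨hZ𝒮, hZY⟩ := Finset.mem_sdiff.1 hZ
  refine (Finset.mem_insert.1 (hgen Z hZ𝒮 hZX)).resolve_left ?_
  rintro rfl
  exact hZY (mem_component.2 ⟨hZ𝒮, .refl⟩)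

theorem tsum_attachedVia_le_prod (ζ : Finset L → ℝ≥0∞) {n : ℕ} {u : Finset (Finset L)}
    (hu : ∀ Y ∈ u,
      ∑' 𝒯 : ↥(rooted 𝔅 Y ∩ {𝒯 | 𝒯.card ≤ n}), ∏ Z ∈ (𝒯 : Finset (Finset L)), W Z ≤ ζ Y) :
    ∑' 𝒮 : attachedVia 𝔅 X n u, ∏ Z ∈ (𝒮 : Finset (Finset L)), W Z ≤ ∏ Y ∈ u, (1 + ζ Y) := by
  induction u using Finset.induction_on with
  | empty =>
    calc _ ≤ ∑' 𝒮 : ({∅} : Set (Finset (Finset L))), ∏ Z ∈ (𝒮 : Finset (Finset L)), W Z := by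
          refine ENNReal.tsum_mono_subtype (fun 𝒮 => ∏ Z ∈ 𝒮, W Z) fun 𝒮 h => ?_
          obtain ⟨⟨-, hX, hconn⟩, -, hgen⟩ := h
          by_contra hne
          obtain ⟨B, hB, hBX⟩ := exists_mem_not_disjoint_of_connected_insert hX hconn
            (Finset.nonempty_iff_ne_empty.2 hne)
          exact Finset.notMem_empty B (hgen B hB hBX)
      _ = ∏ Y ∈ ∅, (1 + ζ Y) := by simp
  | insert Y u hYu ih =>
    have hcomponent : ∑' 𝒯 : ↥(insert ∅ (rooted 𝔅 Y ∩ {𝒯 | 𝒯.card ≤ n})),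
        ∏ Z ∈ (𝒯 : Finset (Finset L)), W Z ≤ 1 + ζ Y := by
      rw [Set.insert_eq]
      refine (ENNReal.tsum_union_le (fun 𝒯 => ∏ Z ∈ 𝒯, W Z) _ _).trans ?_
      rw [tsum_singleton (∅ : Finset (Finset L)) fun 𝒯 => ∏ Z ∈ 𝒯, W Z, Finset.prod_empty]
      exact add_le_add_right (hu Y (Finset.mem_insert_self Y u)) 1
    rw [Finset.prod_insert hYu]
    refine (ENNReal.tsum_le_tsum_mul_tsum_of_injective
      (g := fun 𝒯 : ↥(insert ∅ (rooted 𝔅 Y ∩ {𝒯 | 𝒯.card ≤ n})) => ∏ Z ∈ 𝒯.1, W Z)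
      (h := fun 𝒮 : attachedVia 𝔅 X n u => ∏ Z ∈ 𝒮.1, W Z)
      (fun 𝒮 : attachedVia 𝔅 X n (insert Y u) =>
        (⟨component 𝒮 Y, component_mem_insert_empty_rooted 𝒮.2.1.1 𝒮.2.2.1 Y⟩,
        ⟨𝒮 \ component 𝒮 Y, sdiff_component_mem_attachedVia 𝒮.2⟩))
      (fun 𝒮₁ 𝒮₂ h => ?_) (fun 𝒮 => ?_)).trans ?_
    · simp only [Prod.mk.injEq, Subtype.mk.injEq] at h
      rw [Subtype.ext_iff, ← Finset.union_sdiff_of_subset (component_subset (𝒮 := 𝒮₁.1) (Y := Y)),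
        ← Finset.union_sdiff_of_subset (component_subset (𝒮 := 𝒮₂.1) (Y := Y)), h.2, h.1]
    · rw [mul_comm, Finset.prod_sdiff component_subset]
    · exact mul_le_mul' hcomponent (ih fun Y' hY' => hu Y' (Finset.mem_insert_of_mem hY'))

variable (ζ : Finset L → ℝ≥0∞) (nb : Finset L → Finset (Finset L))
  (hnb : ∀ X Y : Finset L, Y ∈ nb X ↔ (Y ∈ 𝔅 ∧ Y ≠ X ∧ ¬ Disjoint Y X))
  (hW : ∀ X ∈ 𝔅, W X ≤ ζ X / ∏ Y ∈ nb X, (1 + ζ Y))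
include hnb hW

theorem mul_tsum_attached_le {n : ℕ} (hrooted : ∀ Y ∈ 𝔅,
      ∑' 𝒯 : ↥(rooted 𝔅 Y ∩ {𝒯 | 𝒯.card ≤ n}), ∏ Z ∈ (𝒯 : Finset (Finset L)), W Z ≤ ζ Y)
    (hX : X ∈ 𝔅) :
    W X * ∑' 𝒮 : ↥(attached 𝔅 X ∩ {𝒮 | 𝒮.card ≤ n}), ∏ Z ∈ (𝒮 : Finset (Finset L)), W Z ≤
      ζ X := by
  have hsub : attached 𝔅 X ∩ {𝒮 | 𝒮.card ≤ n} ⊆ attachedVia 𝔅 X n (nb X) :=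
    fun 𝒮 ⟨h, hn⟩ => ⟨h, hn, fun Z hZ hZX =>
      (hnb X Z).2 ⟨h.1 hZ, fun hZX' => h.2.1 (hZX' ▸ hZ), hZX⟩⟩
  calc _ ≤ ζ X / (∏ Y ∈ nb X, (1 + ζ Y)) * ∏ Y ∈ nb X, (1 + ζ Y) :=
        mul_le_mul' (hW X hX) ((ENNReal.tsum_mono_subtype (fun 𝒮 => ∏ Z ∈ 𝒮, W Z) hsub).trans
          (tsum_attachedVia_le_prod W ζ fun Y hY => hrooted Y ((hnb X Y).1 hY).1))
    _ ≤ ζ X := by rw [mul_comm]; exact ENNReal.mul_div_le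

theorem tsum_rooted_le : ∀ n, ∀ Y ∈ 𝔅,
    ∑' 𝒯 : ↥(rooted 𝔅 Y ∩ {𝒯 | 𝒯.card ≤ n}), ∏ Z ∈ (𝒯 : Finset (Finset L)), W Z ≤ ζ Y
  | 0, Y, _ => by
    have : IsEmpty ↥(rooted 𝔅 Y ∩ {𝒯 | 𝒯.card ≤ 0}) := ⟨fun ⟨𝒯, ⟨_, hY, _⟩, h0⟩ =>
      Finset.notMem_empty Y (Finset.card_eq_zero.1 (Nat.le_zero.1 h0) ▸ hY)⟩
    simp
  | n + 1, Y, hY => (tsum_rooted_succ_le_mul 𝔅 W Y n).trans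
    (mul_tsum_attached_le W ζ nb hnb hW (tsum_rooted_le n) hY)

end Bonds

theorem stmt_14_general {L : Type*} [DecidableEq L]
    (𝔅 : Set (Finset L))
    (W ζ : Finset L → ℝ≥0∞)
    (nb : Finset L → Finset (Finset L))
    (hnb : ∀ X Y : Finset L, Y ∈ nb X ↔ (Y ∈ 𝔅 ∧ Y ≠ X ∧ ¬ Disjoint Y X))
    (hW : ∀ X ∈ 𝔅, W X ≤ ζ X / ∏ Y ∈ nb X, (1 + ζ Y)) :
    ∀ X₀ ∈ 𝔅,
      W X₀ *
        (1 + ∑' 𝒮 : {𝒮 : Finset (Finset L) //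
              ↑𝒮 ⊆ 𝔅 ∧ X₀ ∉ 𝒮 ∧ 𝒮.Nonempty ∧ (bondGraph (insert X₀ 𝒮)).Connected},
            ∏ Y ∈ (𝒮 : Finset (Finset L)), W Y) ≤ ζ X₀ := by
  intro X₀ hX₀
  rw [Bonds.one_add_tsum_eq_tsum_attached,
    ENNReal.tsum_eq_iSup_tsum_inter_sublevel _ Finset.card fun 𝒮 => ∏ Z ∈ 𝒮, W Z, ENNReal.mul_iSup]
  exact iSup_le fun n =>
    Bonds.mul_tsum_attached_le W ζ nb hnb hW (Bonds.tsum_rooted_le W ζ nb hnb hW n) hX₀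

/-- Tree-summation (Gruber–Kunz type) criterion for bonds: if
`W(X) ≤ ζ(X) / Π_{Y ∈ 𝔅, Y ≠ X, Y ∩ X ≠ ∅} (1 + ζ(Y))` for all bonds `X`, then the sum
`T(X₀) = 1 + Σ over finite families of distinct bonds of `𝔅 \ {X₀}` whose intersection
graph together with `X₀` is connected, of the product of the weights, satisfies
`W(X₀) · T(X₀) ≤ ζ(X₀)`. -/
theorem stmt_14 {L : Type*} [DecidableEq L]
    (𝔅 : Set (Finset L)) (hcnt : 𝔅.Countable)
    (W ζ : Finset L → ℝ≥0∞)
    (hζpos : ∀ X ∈ 𝔅, 0 < ζ X) (hζfin : ∀ X ∈ 𝔅, ζ X ≠ ⊤)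
    (nb : Finset L → Finset (Finset L))
    (hnb : ∀ X Y : Finset L, Y ∈ nb X ↔ (Y ∈ 𝔅 ∧ Y ≠ X ∧ ¬ Disjoint Y X))
    (hW : ∀ X ∈ 𝔅, W X ≤ ζ X / ∏ Y ∈ nb X, (1 + ζ Y)) :
    ∀ X₀ ∈ 𝔅,
      W X₀ *
        (1 + ∑' 𝒮 : {𝒮 : Finset (Finset L) //
              ↑𝒮 ⊆ 𝔅 ∧ X₀ ∉ 𝒮 ∧ 𝒮.Nonempty ∧ (bondGraph (insert X₀ 𝒮)).Connected},
            ∏ Y ∈ (𝒮 : Finset (Finset L)), W Y) ≤ ζ X₀ :=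
  stmt_14_general 𝔅 W ζ nb hnb hW
end

section
/- With normalized factorizing trace tr_Λ, partition function Z_B = tr(e^{-βH_B}) for a family of bonds B, and ρ(B) = Σ_{B'⊆B}(-1)^{|B\B'|} Z_{B'}, one has ρ(B) = tr(ξ(B)) and, if the supports of two families B_1, B_2 are disjoint, ρ(B_1 ∪ B_2) = ρ(B_1)·ρ(B_2). -/
/-!
Over a disjoint union `s ∪ t`, the alternating sum over subsets splits into a double sum over
pairs `C₁ ⊆ s`, `C₂ ⊆ t`, and the sign `(-1)^|(s ∪ t) \ (C₁ ∪ C₂)|` is the product of the two signs;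
so the Möbius transform of `Z` is multiplicative whenever `Z (C₁ ∪ C₂) = Z C₁ * Z C₂`. For the
partition functions this holds because bonds with disjoint supports have commuting Hamiltonians,
so the Boltzmann weight of `C₁ ∪ C₂` is the product of the two weights, on which the trace
factorizes. That `ρ` is the trace of `ξ` is just linearity of the trace.
-/

namespace Finset

variable {ι : Type*} {s t C₁ C₂ : Finset ι}

theorem disjoint_of_disjoint_sup {α : Type*} [Lattice α] [OrderBot α] {f : ι → α}
    (hf : ∀ i ∈ s, f i ≠ ⊥) (h : Disjoint (s.sup f) (t.sup f)) : Disjoint s t :=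
  disjoint_left.2 fun _ hs ht => hf _ hs (disjoint_self.1 (h.mono (le_sup hs) (le_sup ht)))

variable [DecidableEq ι]

theorem union_inter_left_of_disjoint (h : Disjoint s t) (h₁ : C₁ ⊆ s) (h₂ : C₂ ⊆ t) :
    (C₁ ∪ C₂) ∩ s = C₁ := by
  rw [union_inter_distrib_right, inter_eq_left.2 h₁,
    disjoint_iff_inter_eq_empty.1 (h.symm.mono_left h₂), union_empty]

theorem union_inter_right_of_disjoint (h : Disjoint s t) (h₁ : C₁ ⊆ s) (h₂ : C₂ ⊆ t) :
    (C₁ ∪ C₂) ∩ t = C₂ := by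
  rw [union_comm, union_inter_left_of_disjoint h.symm h₂ h₁]

theorem sum_powerset_union_of_disjoint {M : Type*} [AddCommMonoid M] (h : Disjoint s t)
    (f : Finset ι → M) :
    ∑ C ∈ (s ∪ t).powerset, f C = ∑ C₁ ∈ s.powerset, ∑ C₂ ∈ t.powerset, f (C₁ ∪ C₂) := by
  have hinj : Set.InjOn (Function.uncurry (· ⊔ ·) : Finset ι × Finset ι → Finset ι)
      (s.powerset ×ˢ t.powerset : Finset _) := by
    rintro ⟨C₁, C₂⟩ hC ⟨D₁, D₂⟩ hD heq
    simp only [coe_product, Set.mem_prod, mem_coe, mem_powerset] at hC hD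
    simp only [Function.uncurry_apply_pair, sup_eq_union] at heq
    refine Prod.ext ?_ ?_
    · rw [← union_inter_left_of_disjoint h hC.1 hC.2, heq, union_inter_left_of_disjoint h hD.1 hD.2]
    · rw [← union_inter_right_of_disjoint h hC.1 hC.2, heq,
        union_inter_right_of_disjoint h hD.1 hD.2]
  rw [powerset_union, ← image_sup_product, sum_image hinj, sum_product]
  rfl

end Finset

open Finset

section Moebius

variable {ι : Type*} [DecidableEq ι]

def subsetMoebius {R : Type*} [AddCommGroup R] (Z : Finset ι → R) (B : Finset ι) : R :=
  ∑ B' ∈ B.powerset, ((-1 : ℤ) ^ (B \ B').card) • Z B'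

theorem map_subsetMoebius {R S F : Type*} [AddCommGroup R] [AddCommGroup S] [FunLike F R S]
    [AddMonoidHomClass F R S] (f : F) (Z : Finset ι → R) (B : Finset ι) :
    f (subsetMoebius Z B) = subsetMoebius (fun C => f (Z C)) B := by
  simp only [subsetMoebius, map_sum, map_zsmul]

theorem subsetMoebius_union {R : Type*} [Ring R] {Z : Finset ι → R} {s t : Finset ι}
    (h : Disjoint s t) (hZ : ∀ C₁ ⊆ s, ∀ C₂ ⊆ t, Z (C₁ ∪ C₂) = Z C₁ * Z C₂) :
    subsetMoebius Z (s ∪ t) = subsetMoebius Z s * subsetMoebius Z t := by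
  rw [subsetMoebius, sum_powerset_union_of_disjoint h, subsetMoebius, subsetMoebius, sum_mul_sum]
  refine sum_congr rfl fun C₁ h₁ => sum_congr rfl fun C₂ h₂ => ?_
  rw [mem_powerset] at h₁ h₂
  have hsdiff : (s ∪ t) \ (C₁ ∪ C₂) = (s \ C₁) ∪ (t \ C₂) := by
    ext x
    have hx : x ∈ s → x ∉ t := fun hs => disjoint_left.1 h hs
    simp only [mem_sdiff, mem_union]
    tauto
  rw [hsdiff, card_union_of_disjoint (h.mono sdiff_subset sdiff_subset), pow_add, hZ _ h₁ _ h₂,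
    smul_mul_smul_comm]

end Moebius

open NormedSpace

theorem exp_sum_union_of_commute {ι A : Type*} [DecidableEq ι]
    [NormedRing A] [NormedAlgebra ℚ A] [CompleteSpace A] {s t : Finset ι} (h : Disjoint s t)
    (f : ι → A) (hf : ∀ i ∈ s, ∀ j ∈ t, Commute (f i) (f j)) :
    exp (∑ i ∈ s ∪ t, f i) = exp (∑ i ∈ s, f i) * exp (∑ i ∈ t, f i) := by
  rw [sum_union h, exp_add_of_commute]
  exact Commute.sum_left _ _ _ fun i hi => Commute.sum_right _ _ _ fun j hj => hf i hi j hj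

/-- Scalar polymer fugacities: with a normalized factorizing trace `τ`,
`Z_B = τ(e^{-βH_B})` and `ρ(B) = Σ_{B' ⊆ B} (-1)^{|B \ B'|} Z_{B'}`, one has
`ρ(B) = τ(ξ(B))` for the operator-valued fugacity `ξ`, and `ρ` factorizes over families
of bonds with disjoint supports. -/
theorem stmt_19 {L A : Type*} [DecidableEq L]
    [NormedRing A] [NormedAlgebra ℂ A] [CompleteSpace A]
    (Φ : Finset L → A) (β : ℝ)
    (hcomm : ∀ X Y : Finset L, Disjoint X Y → Commute (Φ X) (Φ Y))
    (τ : A →ₗ[ℂ] ℂ)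
    (B₁ B₂ : Finset (Finset L))
    (hne : ∀ X ∈ B₁ ∪ B₂, X.Nonempty)
    (hdisj : Disjoint (B₁.sup id) (B₂.sup id))
    (hτ : ∀ 𝒞₁ ⊆ B₁, ∀ 𝒞₂ ⊆ B₂,
      τ (exp (-(β • ∑ X ∈ 𝒞₁, Φ X)) * exp (-(β • ∑ X ∈ 𝒞₂, Φ X))) =
        τ (exp (-(β • ∑ X ∈ 𝒞₁, Φ X))) * τ (exp (-(β • ∑ X ∈ 𝒞₂, Φ X))))
    (ρ : Finset (Finset L) → ℂ)
    (hρ : ∀ B, ρ B = ∑ B' ∈ B.powerset, ((-1 : ℤ) ^ ((B \ B').card)) •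
      τ (exp (-(β • ∑ X ∈ B', Φ X)))) :
    (∀ B : Finset (Finset L),
        ρ B = τ (∑ B' ∈ B.powerset, ((-1 : ℤ) ^ ((B \ B').card)) •
          exp (-(β • ∑ X ∈ B', Φ X)))) ∧
      ρ (B₁ ∪ B₂) = ρ B₁ * ρ B₂ := by
  refine ⟨fun B => (hρ B).trans (map_subsetMoebius τ _ B).symm, ?_⟩
  have hB : Disjoint B₁ B₂ :=
    disjoint_of_disjoint_sup (fun X hX => (hne X (mem_union_left _ hX)).ne_empty) hdisj
  let _ : NormedAlgebra ℚ A := NormedAlgebra.restrictScalars ℚ ℂ A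
  have hexp : ∀ C₁ ⊆ B₁, ∀ C₂ ⊆ B₂, exp (-(β • ∑ X ∈ C₁ ∪ C₂, Φ X)) =
      exp (-(β • ∑ X ∈ C₁, Φ X)) * exp (-(β • ∑ X ∈ C₂, Φ X)) := by
    intro C₁ h₁ C₂ h₂
    simp only [smul_sum, ← sum_neg_distrib]
    refine exp_sum_union_of_commute (hB.mono h₁ h₂) _ fun X hX Y hY => ?_
    have hXY : Disjoint X Y :=
      hdisj.mono (le_sup (f := id) (h₁ hX)) (le_sup (f := id) (h₂ hY))
    exact (((hcomm X Y hXY).smul_left β).smul_right β).neg_left.neg_right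
  rw [hρ, hρ, hρ]
  exact subsetMoebius_union hB fun C₁ h₁ C₂ h₂ => by rw [hexp C₁ h₁ C₂ h₂, hτ C₁ h₁ C₂ h₂]
end
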